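/- Let K be a compact convex subset of a locally convex Hausdorff real topological vector space, and let f, g be lower semicontinuous affine functions K → (-∞, ∞]. Then f is way-below g in the dcpo LAff(K) (ordered pointwise) if and only if there exist a continuous affine function h : K → ℝ and ε > 0 such that f + ε ≤ h ≤ g pointwise. -/

import Mathlib

/-- Membership in `LAff(K)`: lower semicontinuous affine functions
`K → (-∞, ∞]`, modeled inside `EReal`. -/
def IsLAffOn {E : Type*} [AddCommGroup E] [Module ℝ E] [TopologicalSpace E]
    (K : Set E) (f : E → EReal) : Prop :=
  LowerSemicontinuousOn f K ∧ (∀ x ∈ K, f x ≠ ⊥) ∧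
    ∀ x ∈ K, ∀ y ∈ K, ∀ t : ℝ, 0 ≤ t → t ≤ 1 →
      f (t • x + (1 - t) • y) = (t : EReal) * f x + ((1 - t : ℝ) : EReal) * f y

/-!
If `f + ε ≤ h ≤ g` with `h` continuous and `D` is directed with `g ≤ sup D`, the sets where
`h - ε < d` (`d ∈ D`) form a directed cover of the compact set `K` by relatively open sets, so a
single `d ∈ D` exceeds `h - ε ≥ f` on all of `K`.

Conversely, the continuous affine functions lying strictly below `g` on `K` form a directed family
with supremum `g`. Both facts come from separating, by Hahn–Banach, a compact convex set lying
strictly below `g` (a point, or the convex join of the graphs of two such affine functions, which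
lies below `g` because `g` is concave) from the closed convex epigraph of `g`. Applying `f ≪ g` to
this family yields an affine `d` with `f ≤ d < g`; as `g - d` is lower semicontinuous and positive
on `K`, it exceeds some `δ > 0`, and `h = d + δ` works.
-/

open Set Filter Topology

section Compactness

variable {X : Type*} [TopologicalSpace X] {K : Set X}

theorem IsCompact.exists_forall_of_directed {ι : Type*} [Nonempty ι] (hK : IsCompact K)
    {P : ι → X → Prop} (hdir : ∀ i j, ∃ k, (∀ x ∈ K, P i x → P k x) ∧ ∀ x ∈ K, P j x → P k x)
    (hloc : ∀ x ∈ K, ∃ i, ∀ᶠ y in 𝓝[K] x, P i y) :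
    ∃ i, ∀ x ∈ K, P i x := by
  let U i := interior {y | y ∈ K → P i y}
  have hcover : K ⊆ ⋃ i, U i := fun x hx => by
    obtain ⟨i, hi⟩ := hloc x hx
    exact mem_iUnion.2 ⟨i, mem_interior_iff_mem_nhds.2 (eventually_nhdsWithin_iff.1 hi)⟩
  have hUdir : Directed (· ⊆ ·) U := fun i j => by
    obtain ⟨k, hik, hjk⟩ := hdir i j
    exact ⟨k, interior_mono fun y hy hyK => hik y hyK (hy hyK),
      interior_mono fun y hy hyK => hjk y hyK (hy hyK)⟩
  obtain ⟨i, hi⟩ := hK.elim_directed_cover U (fun _ => isOpen_interior) hcover hUdir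
  exact ⟨i, fun x hx => interior_subset (hi hx) hx⟩

theorem LowerSemicontinuousWithinAt.exists_pos_eventually_add_lt {p : X → EReal} {q : X → ℝ}
    {x : X} (hp : LowerSemicontinuousWithinAt p K x) (hq : ContinuousWithinAt q K x)
    (hlt : (q x : EReal) < p x) :
    ∃ δ > 0, ∀ᶠ y in 𝓝[K] x, ((q y + δ : ℝ) : EReal) < p y := by
  obtain ⟨c, hqc, hcp⟩ := EReal.lt_iff_exists_real_btwn.1 hlt
  have hqc : q x < c := EReal.coe_lt_coe_iff.1 hqc
  refine ⟨(c - q x) / 2, by linarith, ?_⟩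
  filter_upwards [hp c hcp, hq.eventually (eventually_lt_nhds (lt_add_of_pos_right (q x)
    (show 0 < (c - q x) / 2 by linarith)))] with y hpy hqy
  exact lt_trans (EReal.coe_lt_coe_iff.2 (by linarith)) hpy

theorem IsCompact.exists_pos_forall_add_lt (hK : IsCompact K) {p : X → EReal} {q : X → ℝ}
    (hp : LowerSemicontinuousOn p K) (hq : ContinuousOn q K)
    (hlt : ∀ x ∈ K, (q x : EReal) < p x) :
    ∃ δ > 0, ∀ x ∈ K, ((q x + δ : ℝ) : EReal) < p x := by
  have := (nonempty_Ioi (a := (0 : ℝ))).to_subtype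
  obtain ⟨⟨δ, hδ⟩, h⟩ := hK.exists_forall_of_directed
    (P := fun (δ : Ioi (0 : ℝ)) x => ((q x + δ : ℝ) : EReal) < p x)
    (fun δ₁ δ₂ => ⟨⟨min δ₁ δ₂, mem_Ioi.2 (lt_min δ₁.2 δ₂.2)⟩,
      fun x _ h => (EReal.coe_le_coe_iff.2 (add_le_add_right (min_le_left _ _) _)).trans_lt h,
      fun x _ h => (EReal.coe_le_coe_iff.2 (add_le_add_right (min_le_right _ _) _)).trans_lt h⟩)
    (fun x hx => by
      obtain ⟨δ, hδ, h⟩ :=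
        LowerSemicontinuousWithinAt.exists_pos_eventually_add_lt (hp x hx) (hq x hx) (hlt x hx)
      exact ⟨⟨δ, hδ⟩, h⟩)
  exact ⟨δ, hδ, h⟩

theorem IsCompact.exists_mem_forall_lt_of_directed (hK : IsCompact K) {D : Set (X → EReal)}
    (hDne : D.Nonempty) (hDlsc : ∀ d ∈ D, LowerSemicontinuousOn d K)
    (hdir : ∀ d₁ ∈ D, ∀ d₂ ∈ D, ∃ d₃ ∈ D, (∀ x ∈ K, d₁ x ≤ d₃ x) ∧ ∀ x ∈ K, d₂ x ≤ d₃ x)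
    {q : X → ℝ} (hq : ContinuousOn q K) (hlt : ∀ x ∈ K, (q x : EReal) < ⨆ d ∈ D, d x) :
    ∃ d ∈ D, ∀ x ∈ K, (q x : EReal) < d x := by
  have := hDne.to_subtype
  obtain ⟨⟨d, hd⟩, h⟩ := hK.exists_forall_of_directed (P := fun (d : D) x => (q x : EReal) < d.1 x)
    (fun ⟨d₁, h₁⟩ ⟨d₂, h₂⟩ => by
      obtain ⟨d₃, h₃, h₁₃, h₂₃⟩ := hdir d₁ h₁ d₂ h₂
      exact ⟨⟨d₃, h₃⟩, fun x hx h => h.trans_le (h₁₃ x hx), fun x hx h => h.trans_le (h₂₃ x hx)⟩)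
    (fun x hx => by
      obtain ⟨d, hd, hqd⟩ : ∃ d ∈ D, (q x : EReal) < d x := by
        simpa only [lt_iSup_iff, exists_prop] using hlt x hx
      obtain ⟨δ, hδ, h⟩ := LowerSemicontinuousWithinAt.exists_pos_eventually_add_lt
        (hDlsc d hd x hx) (hq x hx) hqd
      exact ⟨⟨d, hd⟩, h.mono fun y hy =>
        (EReal.coe_le_coe_iff.2 (le_add_of_nonneg_right hδ.le)).trans_lt hy⟩)
  exact ⟨d, hd, h⟩

theorem IsCompact.exists_coe_lt_of_lowerSemicontinuousOn (hK : IsCompact K) {p : X → EReal}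
    (hp : LowerSemicontinuousOn p K) (hne : ∀ x ∈ K, p x ≠ ⊥) :
    ∃ m : ℝ, ∀ x ∈ K, (m : EReal) < p x := by
  rcases K.eq_empty_or_nonempty with rfl | hKne
  · exact ⟨0, by simp⟩
  obtain ⟨x₀, hx₀, hmin⟩ := hp.exists_isMinOn hKne hK
  obtain ⟨m, -, hm⟩ := EReal.lt_iff_exists_real_btwn.1 (bot_lt_iff_ne_bot.2 (hne x₀ hx₀))
  exact ⟨m, fun x hx => hm.trans_le (hmin hx)⟩

end Compactness

theorem IsCompact.convexJoin {V : Type*} [AddCommGroup V] [Module ℝ V] [TopologicalSpace V]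
    [ContinuousAdd V] [ContinuousSMul ℝ V] {s t : Set V} (hs : IsCompact s) (ht : IsCompact t) :
    IsCompact (_root_.convexJoin ℝ s t) := by
  have : _root_.convexJoin ℝ s t =
      (fun p : (V × V) × ℝ => (1 - p.2) • p.1.1 + p.2 • p.1.2) '' ((s ×ˢ t) ×ˢ Icc 0 1) := by
    ext z
    simp only [mem_convexJoin, segment_eq_image, mem_image, mem_prod, Prod.exists]
    aesop
  exact this ▸ ((hs.prod ht).prod isCompact_Icc).image (by fun_prop)

section Epigraph

variable {E : Type*} {K : Set E} {g : E → EReal}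

def epigraphOn (K : Set E) (g : E → EReal) : Set (E × ℝ) := {p | p.1 ∈ K ∧ g p.1 ≤ p.2}

def strictHypographOn (K : Set E) (g : E → EReal) : Set (E × ℝ) := {p | p.1 ∈ K ∧ p.2 < g p.1}

theorem disjoint_strictHypographOn_epigraphOn :
    Disjoint (strictHypographOn K g) (epigraphOn K g) :=
  disjoint_left.2 fun _ hlt hle => not_le.2 hlt.2 hle.2

theorem coe_lt_of_forall_mem_epigraphOn {x : E} (hx : x ∈ K) {a : ℝ}
    (h : ∀ t : ℝ, (x, t) ∈ epigraphOn K g → a < t) : (a : EReal) < g x :=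
  lt_of_not_ge fun hle => lt_irrefl a (h a ⟨hx, hle⟩)

theorem isClosed_epigraphOn [TopologicalSpace E] (hK : IsClosed K)
    (hg : LowerSemicontinuousOn g K) : IsClosed (epigraphOn K g) :=
  ((lowerSemicontinuousOn_iff_isClosed_epigraph hK).1 hg).preimage
    (continuous_id.prodMap continuous_coe_real_ereal)

variable [AddCommGroup E] [Module ℝ E] [TopologicalSpace E]

theorem IsLAffOn.convex_epigraphOn (hK : Convex ℝ K) (hg : IsLAffOn K g) :
    Convex ℝ (epigraphOn K g) := by
  rintro ⟨x, s⟩ ⟨hx, hxs⟩ ⟨y, r⟩ ⟨hy, hyr⟩ a b ha hb hab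
  obtain rfl : b = 1 - a := by linarith
  refine ⟨hK hx hy ha hb hab, ?_⟩
  simp only [Prod.smul_mk, Prod.mk_add_mk, smul_eq_mul]
  rw [hg.2.2 x hx y hy a ha (by linarith), EReal.coe_add, EReal.coe_mul, EReal.coe_mul]
  gcongr

theorem IsLAffOn.convex_strictHypographOn (hK : Convex ℝ K) (hg : IsLAffOn K g) :
    Convex ℝ (strictHypographOn K g) := by
  rintro ⟨x, s⟩ ⟨hx, hxs⟩ ⟨y, r⟩ ⟨hy, hyr⟩ a b ha hb hab
  obtain rfl : b = 1 - a := by linarith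
  refine ⟨hK hx hy ha hb hab, ?_⟩
  obtain ⟨s', hss', hs'⟩ := EReal.lt_iff_exists_real_btwn.1 hxs
  obtain ⟨r', hrr', hr'⟩ := EReal.lt_iff_exists_real_btwn.1 hyr
  simp only [Prod.smul_mk, Prod.mk_add_mk, smul_eq_mul]
  rw [hg.2.2 x hx y hy a ha (by linarith)]
  have hss' : s < s' := EReal.coe_lt_coe_iff.1 hss'
  have hrr' : r < r' := EReal.coe_lt_coe_iff.1 hrr'
  calc ((a * s + (1 - a) * r : ℝ) : EReal) < ((a * s' + (1 - a) * r' : ℝ) : EReal) := by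
        refine EReal.coe_lt_coe_iff.2 ?_
        rcases ha.eq_or_lt with rfl | ha
        · simpa using hrr'
        · nlinarith [mul_le_mul_of_nonneg_left hrr'.le hb]
    _ ≤ (a : EReal) * g x + ((1 - a : ℝ) : EReal) * g y := by
        rw [EReal.coe_add, EReal.coe_mul, EReal.coe_mul]
        gcongr

end Epigraph

section Separation

variable {E : Type*} [AddCommGroup E] [Module ℝ E] [TopologicalSpace E]
  [IsTopologicalAddGroup E] [ContinuousSMul ℝ E] [LocallyConvexSpace ℝ E]
  {K : Set E} {g : E → EReal}

theorem exists_separating_functional_of_disjoint_epigraphOn (hcl : IsClosed (epigraphOn K g))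
    (hcv : Convex ℝ (epigraphOn K g)) (hne : (epigraphOn K g).Nonempty) {C : Set (E × ℝ)}
    (hCc : IsCompact C) (hCv : Convex ℝ C) (hdisj : Disjoint C (epigraphOn K g)) :
    ∃ (φ : E →L[ℝ] ℝ) (β u v : ℝ), 0 ≤ β ∧ u < v ∧ (∀ p ∈ C, φ p.1 + β * p.2 < u) ∧
      ∀ x t, (x, t) ∈ epigraphOn K g → v < φ x + β * t := by
  obtain ⟨ℓ, u, v, hCu, huv, hepi⟩ := geometric_hahn_banach_compact_closed hCv hCc hcv hcl hdisj
  set φ : E →L[ℝ] ℝ := ℓ.comp (.inl ℝ E ℝ)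
  set β : ℝ := ℓ (0, 1)
  have hℓ : ∀ p : E × ℝ, ℓ p = φ p.1 + β * p.2 := fun ⟨x, t⟩ => by
    rw [mul_comm]
    show ℓ (x, t) = ℓ (x, 0) + t • ℓ (0, 1)
    rw [← map_smul, ← map_add]
    simp
  have hepi' : ∀ x t, (x, t) ∈ epigraphOn K g → v < φ x + β * t :=
    fun x t h => hℓ (x, t) ▸ hepi _ h
  refine ⟨φ, β, u, v, ?_, huv, fun p hp => hℓ p ▸ hCu p hp, hepi'⟩
  -- the epigraph is closed upwards, so `ℓ` can only be bounded below on it if `β ≥ 0`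
  by_contra! hβ
  have hβ0 : β ≠ 0 := hβ.ne
  obtain ⟨⟨x₁, t₁⟩, hp₁⟩ := hne
  have h₁ := hepi' x₁ t₁ hp₁
  have h₂ := hepi' x₁ (t₁ + (φ x₁ + β * t₁ - v) / -β)
    ⟨hp₁.1, hp₁.2.trans (EReal.coe_le_coe_iff.2 (le_add_of_nonneg_right
      (div_nonneg (by linarith) (by linarith))))⟩
  have : β * ((φ x₁ + β * t₁ - v) / -β) = v - (φ x₁ + β * t₁) := by
    field_simp
    ring
  linarith

theorem exists_affine_lt_on_of_disjoint_epigraphOn (hcl : IsClosed (epigraphOn K g))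
    (hcv : Convex ℝ (epigraphOn K g)) {m : ℝ} (hm : ∀ x ∈ K, (m : EReal) < g x)
    {C : Set (E × ℝ)} (hCc : IsCompact C) (hCv : Convex ℝ C)
    (hdisj : Disjoint C (epigraphOn K g)) :
    ∃ (L : E →L[ℝ] ℝ) (c : ℝ),
      (∀ x ∈ K, ((L x + c : ℝ) : EReal) < g x) ∧ ∀ p ∈ C, p.2 < L p.1 + c := by
  obtain ⟨T, hT⟩ := (hCc.image continuous_snd).bddAbove
  have hT : ∀ p ∈ C, p.2 ≤ T := fun p hp => hT (mem_image_of_mem _ hp)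
  rcases (epigraphOn K g).eq_empty_or_nonempty with hempty | hne
  · refine ⟨0, T + 1, fun x hx => coe_lt_of_forall_mem_epigraphOn hx fun t ht => ?_,
      fun p hp => by simpa using (hT p hp).trans_lt (lt_add_one T)⟩
    simp [hempty] at ht
  obtain ⟨φ, β, u, v, hβ, huv, hC, hepi⟩ :=
    exists_separating_functional_of_disjoint_epigraphOn hcl hcv hne hCc hCv hdisj
  rcases hβ.lt_or_eq with hβ | hβ
  · refine ⟨(-β⁻¹) • φ, u / β, fun x hx => coe_lt_of_forall_mem_epigraphOn hx fun t ht => ?_,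
      fun p hp => ?_⟩
    all_goals
      simp only [smul_apply, smul_eq_mul]
      field_simp
    · linarith [hepi x t ht]
    · linarith [hC p hp]
  · rw [← hβ] at hepi hC
    simp only [zero_mul, add_zero] at hepi hC
    -- a vertical hyperplane: tilt the lower bound `m` steeply enough along `φ`
    set n := (|T - m| + 1) / (v - u)
    have hn : 0 < n := div_pos (by positivity) (sub_pos.2 huv)
    have hnvu : n * (v - u) = |T - m| + 1 := div_mul_cancel₀ _ (sub_pos.2 huv).ne'
    refine ⟨(-n) • φ, m + n * v, fun x hx => coe_lt_of_forall_mem_epigraphOn hx fun t ht => ?_,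
      fun p hp => ?_⟩
    all_goals simp only [smul_apply, smul_eq_mul]
    · have hmt : m < t := EReal.coe_lt_coe_iff.1 ((hm x hx).trans_le ht.2)
      nlinarith [hepi x t ht]
    · nlinarith [hC p hp, hT p hp, le_abs_self (T - m)]

end Separation

section AffineMinorants

variable {E : Type*} [AddCommGroup E] [Module ℝ E] [TopologicalSpace E]
  {K : Set E} {g : E → EReal}

def strictAffineMinorantsOn (K : Set E) (g : E → EReal) : Set (E → EReal) :=
  {d | ∃ (L : E →L[ℝ] ℝ) (c : ℝ), d = (fun x => ((L x + c : ℝ) : EReal)) ∧ ∀ x ∈ K, d x < g x}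

theorem isLAffOn_continuousLinearMap_add_const (L : E →L[ℝ] ℝ) (c : ℝ) :
    IsLAffOn K fun x => ((L x + c : ℝ) : EReal) := by
  have hcont : Continuous fun x => ((L x + c : ℝ) : EReal) :=
    continuous_coe_real_ereal.comp (by fun_prop)
  refine ⟨hcont.lowerSemicontinuous.lowerSemicontinuousOn K, fun x _ => EReal.coe_ne_bot _,
    fun x _ y _ t _ _ => ?_⟩
  rw [← EReal.coe_mul, ← EReal.coe_mul, ← EReal.coe_add, EReal.coe_eq_coe_iff]
  simp only [map_add, map_smul, smul_eq_mul]
  ring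

theorem IsCompact.strictAffineMinorantsOn_nonempty (hK : IsCompact K) (hg : IsLAffOn K g) :
    (strictAffineMinorantsOn K g).Nonempty := by
  obtain ⟨m, hm⟩ := hK.exists_coe_lt_of_lowerSemicontinuousOn hg.1 hg.2.1
  exact ⟨_, 0, m, rfl, by simpa using hm⟩

variable [IsTopologicalAddGroup E] [ContinuousSMul ℝ E] [T2Space E] [LocallyConvexSpace ℝ E]

theorem IsLAffOn.exists_affine_lt_on_of_subset_strictHypographOn (hK : IsCompact K)
    (hKcvx : Convex ℝ K) (hg : IsLAffOn K g) {C : Set (E × ℝ)} (hCc : IsCompact C)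
    (hCv : Convex ℝ C) (hCg : C ⊆ strictHypographOn K g) :
    ∃ (L : E →L[ℝ] ℝ) (c : ℝ),
      (∀ x ∈ K, ((L x + c : ℝ) : EReal) < g x) ∧ ∀ p ∈ C, p.2 < L p.1 + c := by
  obtain ⟨m, hm⟩ := hK.exists_coe_lt_of_lowerSemicontinuousOn hg.1 hg.2.1
  exact exists_affine_lt_on_of_disjoint_epigraphOn (isClosed_epigraphOn hK.isClosed hg.1)
    (hg.convex_epigraphOn hKcvx) hm hCc hCv (disjoint_strictHypographOn_epigraphOn.mono_left hCg)

theorem IsLAffOn.directed_strictAffineMinorantsOn (hK : IsCompact K) (hKcvx : Convex ℝ K)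
    (hg : IsLAffOn K g) :
    ∀ d₁ ∈ strictAffineMinorantsOn K g, ∀ d₂ ∈ strictAffineMinorantsOn K g,
      ∃ d₃ ∈ strictAffineMinorantsOn K g, (∀ x ∈ K, d₁ x ≤ d₃ x) ∧ ∀ x ∈ K, d₂ x ≤ d₃ x := by
  rintro _ ⟨L₁, c₁, rfl, h₁⟩ _ ⟨L₂, c₂, rfl, h₂⟩
  let graph (L : E →L[ℝ] ℝ) (c : ℝ) : Set (E × ℝ) := (fun x => (x, L x + c)) '' K
  have hcompact (L c) : IsCompact (graph L c) := hK.image (by fun_prop)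
  have hconvex (L c) : Convex ℝ (graph L c) := by
    rintro _ ⟨x, hx, rfl⟩ _ ⟨y, hy, rfl⟩ a b ha hb hab
    refine ⟨a • x + b • y, hKcvx hx hy ha hb hab, ?_⟩
    simp only [Prod.smul_mk, Prod.mk_add_mk, map_add, map_smul, smul_eq_mul]
    congr 1
    linear_combination (-c) * hab
  have hsub : convexJoin ℝ (graph L₁ c₁) (graph L₂ c₂) ⊆ strictHypographOn K g := by
    refine convexJoin_subset ?_ ?_ (hg.convex_strictHypographOn hKcvx) <;>
      rintro _ ⟨x, hx, rfl⟩
    exacts [⟨hx, h₁ x hx⟩, ⟨hx, h₂ x hx⟩]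
  obtain ⟨L, c, hlt, hC⟩ := hg.exists_affine_lt_on_of_subset_strictHypographOn hK hKcvx
    ((hcompact L₁ c₁).convexJoin (hcompact L₂ c₂)) ((hconvex L₁ c₁).convexJoin (hconvex L₂ c₂)) hsub
  refine ⟨_, ⟨L, c, rfl, hlt⟩, fun x hx => EReal.coe_le_coe_iff.2 (hC (x, L₁ x + c₁) ?_).le,
    fun x hx => EReal.coe_le_coe_iff.2 (hC (x, L₂ x + c₂) ?_).le⟩
  exacts [subset_convexJoin_left ⟨_, mem_image_of_mem _ hx⟩ (mem_image_of_mem _ hx),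
    subset_convexJoin_right ⟨_, mem_image_of_mem _ hx⟩ (mem_image_of_mem _ hx)]

theorem IsLAffOn.le_iSup_strictAffineMinorantsOn (hK : IsCompact K) (hKcvx : Convex ℝ K)
    (hg : IsLAffOn K g) {x₀ : E} (hx₀ : x₀ ∈ K) :
    g x₀ ≤ ⨆ d ∈ strictAffineMinorantsOn K g, d x₀ := by
  refine le_of_forall_lt fun a ha => ?_
  obtain ⟨r, har, hrg⟩ := EReal.lt_iff_exists_real_btwn.1 ha
  obtain ⟨L, c, hlt, hC⟩ := hg.exists_affine_lt_on_of_subset_strictHypographOn hK hKcvx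
    isCompact_singleton (convex_singleton (x₀, r)) (singleton_subset_iff.2 ⟨hx₀, hrg⟩)
  calc a < r := har
    _ < ((L x₀ + c : ℝ) : EReal) := EReal.coe_lt_coe_iff.2 (hC _ rfl)
    _ ≤ ⨆ d ∈ strictAffineMinorantsOn K g, d x₀ :=
      le_biSup (fun d : E → EReal => d x₀) (s := strictAffineMinorantsOn K g) ⟨L, c, rfl, hlt⟩

end AffineMinorants

theorem laff_wayBelow_iff_general {E : Type*} [AddCommGroup E] [Module ℝ E]
    [TopologicalSpace E] [IsTopologicalAddGroup E] [ContinuousSMul ℝ E]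
    [T2Space E] [LocallyConvexSpace ℝ E]
    (K : Set E) (hKcpt : IsCompact K) (hKcvx : Convex ℝ K)
    (f g : E → EReal) (hg : IsLAffOn K g) :
    (∀ D : Set (E → EReal), D.Nonempty → (∀ d ∈ D, IsLAffOn K d) →
        (∀ d₁ ∈ D, ∀ d₂ ∈ D, ∃ d₃ ∈ D, (∀ x ∈ K, d₁ x ≤ d₃ x) ∧ ∀ x ∈ K, d₂ x ≤ d₃ x) →
        (∀ x ∈ K, g x ≤ ⨆ d ∈ D, d x) →
        ∃ d ∈ D, ∀ x ∈ K, f x ≤ d x)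
      ↔ ∃ h : E → ℝ, ContinuousOn h K ∧
          (∀ x ∈ K, ∀ y ∈ K, ∀ t : ℝ, 0 ≤ t → t ≤ 1 →
            h (t • x + (1 - t) • y) = t * h x + (1 - t) * h y) ∧
          ∃ ε : ℝ, 0 < ε ∧ (∀ x ∈ K, f x + (ε : EReal) ≤ (h x : EReal)) ∧
            ∀ x ∈ K, (h x : EReal) ≤ g x := by
  constructor
  · intro hwb
    obtain ⟨_, ⟨L, c, rfl, hlt⟩, hfd⟩ := hwb _ (hKcpt.strictAffineMinorantsOn_nonempty hg)
      (fun d ⟨L, c, hd, _⟩ => hd ▸ isLAffOn_continuousLinearMap_add_const L c)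
      (hg.directed_strictAffineMinorantsOn hKcpt hKcvx)
      (fun x hx => hg.le_iSup_strictAffineMinorantsOn hKcpt hKcvx hx)
    obtain ⟨δ, hδ, hgap⟩ := hKcpt.exists_pos_forall_add_lt hg.1 (by fun_prop) hlt
    refine ⟨fun x => L x + c + δ, by fun_prop, fun x _ y _ t _ _ => ?_, δ, hδ,
      fun x hx => ?_, fun x hx => (hgap x hx).le⟩
    · simp only [map_add, map_smul, smul_eq_mul]
      ring
    · rw [EReal.coe_add]
      exact add_le_add_left (hfd x hx) _
  · rintro ⟨h, hh, -, ε, hε, hfh, hhg⟩ D hDne hD hdir hsup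
    obtain ⟨d, hdD, hd⟩ := hKcpt.exists_mem_forall_lt_of_directed hDne (fun d hd => (hD d hd).1)
      hdir (q := fun x => h x - ε) (by fun_prop) fun x hx =>
        (EReal.coe_lt_coe_iff.2 (sub_lt_self _ hε)).trans_le ((hhg x hx).trans (hsup x hx))
    refine ⟨d, hdD, fun x hx => le_of_lt ?_⟩
    calc f x ≤ ((h x - ε : ℝ) : EReal) := by
          rw [EReal.coe_sub, EReal.le_sub_iff_add_le (.inl (EReal.coe_ne_bot ε))
            (.inl (EReal.coe_ne_top ε))]
          exact hfh x hx
      _ < d x := hd x hx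

/-- For `f, g ∈ LAff(K)`, `f` is way-below `g` in the dcpo
`LAff(K)` (with pointwise order, directed suprema being pointwise suprema)
if and only if there are a continuous affine `h : K → ℝ` and `ε > 0` with
`f + ε ≤ h ≤ g` pointwise on `K`. -/
theorem laff_wayBelow_iff {E : Type*} [AddCommGroup E] [Module ℝ E]
    [TopologicalSpace E] [IsTopologicalAddGroup E] [ContinuousSMul ℝ E]
    [T2Space E] [LocallyConvexSpace ℝ E]
    (K : Set E) (hKcpt : IsCompact K) (hKcvx : Convex ℝ K)
    (f g : E → EReal) (hf : IsLAffOn K f) (hg : IsLAffOn K g) :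
    (∀ D : Set (E → EReal), D.Nonempty → (∀ d ∈ D, IsLAffOn K d) →
        (∀ d₁ ∈ D, ∀ d₂ ∈ D, ∃ d₃ ∈ D, (∀ x ∈ K, d₁ x ≤ d₃ x) ∧ ∀ x ∈ K, d₂ x ≤ d₃ x) →
        (∀ x ∈ K, g x ≤ ⨆ d ∈ D, d x) →
        ∃ d ∈ D, ∀ x ∈ K, f x ≤ d x)
      ↔ ∃ h : E → ℝ, ContinuousOn h K ∧
          (∀ x ∈ K, ∀ y ∈ K, ∀ t : ℝ, 0 ≤ t → t ≤ 1 →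
            h (t • x + (1 - t) • y) = t * h x + (1 - t) * h y) ∧
          ∃ ε : ℝ, 0 < ε ∧ (∀ x ∈ K, f x + (ε : EReal) ≤ (h x : EReal)) ∧
            ∀ x ∈ K, (h x : EReal) ≤ g x :=
  laff_wayBelow_iff_general K hKcpt hKcvx f g hg
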